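/- Let G be a topological group and D ⊆ G be a discrete normal subgroup. If G is nearly simple, then the quotient topological group G/D is nearly simple. -/

import Mathlib

open scoped Manifold
open Matrix

universe u

/-! ### Basic group-theoretic notions -/

/-- A subgroup is subnormal if it is the last term of a finite descending chain of
subgroups starting at `⊤`, each normal in its predecessor. -/
def IsSubnormal {G : Type*} [Group G] (S : Subgroup G) : Prop :=
  ∃ (k : ℕ) (c : ℕ → Subgroup G), c 0 = ⊤ ∧ c k = S ∧
    (∀ i, c (i + 1) ≤ c i) ∧ ∀ i, ∀ x ∈ c i, ∀ y ∈ c (i + 1), x * y * x⁻¹ ∈ c (i + 1)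

/-- A topological group is nearly simple if every closed subnormal subgroup is
open or discrete. -/
def NearlySimple (G : Type*) [Group G] [TopologicalSpace G] : Prop :=
  ∀ S : Subgroup G, IsSubnormal S → IsClosed (S : Set G) →
    IsOpen (S : Set G) ∨ DiscreteTopology S

/-- Isomorphism of topological groups. -/
def TopGrpIso (G H : Type*) [Group G] [TopologicalSpace G] [Group H] [TopologicalSpace H] :
    Prop :=
  ∃ e : G ≃* H, Continuous e ∧ Continuous e.symm

/-- A topological group is topologically simple if it is non-trivial and its only
closed normal subgroups are `⊥` and `⊤`. -/
def TopologicallySimple (G : Type*) [Group G] [TopologicalSpace G] : Prop :=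
  Nontrivial G ∧ ∀ N : Subgroup G, N.Normal → IsClosed (N : Set G) → N = ⊥ ∨ N = ⊤

/-- The radical of a group: the union of all soluble normal subgroups. -/
def radicalSet (G : Type*) [Group G] : Set G :=
  ⋃ N ∈ {N : Subgroup G | N.Normal ∧ IsSolvable N}, (N : Set G)

/-- Exactly one of two propositions holds. -/
def ExactlyOne2 (a b : Prop) : Prop := (a ∨ b) ∧ ¬(a ∧ b)

/-- Exactly one of four propositions holds. -/
def ExactlyOne4 (a b c d : Prop) : Prop :=
  (a ∨ b ∨ c ∨ d) ∧ ¬(a ∧ b) ∧ ¬(a ∧ c) ∧ ¬(a ∧ d) ∧ ¬(b ∧ c) ∧ ¬(b ∧ d) ∧ ¬(c ∧ d)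

/-- Exactly one of five propositions holds. -/
def ExactlyOne5 (a b c d e : Prop) : Prop :=
  (a ∨ b ∨ c ∨ d ∨ e) ∧ ¬(a ∧ b) ∧ ¬(a ∧ c) ∧ ¬(a ∧ d) ∧ ¬(a ∧ e) ∧ ¬(b ∧ c) ∧ ¬(b ∧ d) ∧
    ¬(b ∧ e) ∧ ¬(c ∧ d) ∧ ¬(c ∧ e) ∧ ¬(d ∧ e)

/-! ### p-adic Lie groups -/

/-- A `p`-adic Lie group structure on a topological group `G`: a finite-dimensional
analytic (here: smooth) manifold structure over `ℚ_[p]` making multiplication and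
inversion smooth. -/
structure PadicLieGroup (p : ℕ) [Fact p.Prime] (G : Type*) [Group G] [TopologicalSpace G] where
  dim : ℕ
  charted : ChartedSpace (Fin dim → ℚ_[p]) G
  lie : letI := charted; LieGroup (𝓘(ℚ_[p], Fin dim → ℚ_[p])) (⊤ : ℕ∞) G

variable {p : ℕ} [Fact p.Prime] {G : Type*} [Group G] [TopologicalSpace G]

/-- The adjoint representation: the derivative at `1` of conjugation by `g`,
an endomorphism of the Lie algebra `L(G) = Fin dim → ℚ_[p]` (the tangent space at `1`). -/
noncomputable def PadicLieGroup.Ad (h : PadicLieGroup p G) (g : G) :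
    (Fin h.dim → ℚ_[p]) →L[ℚ_[p]] (Fin h.dim → ℚ_[p]) :=
  letI := h.charted
  mfderiv (𝓘(ℚ_[p], Fin h.dim → ℚ_[p])) (𝓘(ℚ_[p], Fin h.dim → ℚ_[p]))
    (fun x => g * x * g⁻¹) (1 : G)

/-- The infinitesimal adjoint representation, `ad = L(Ad)`: the derivative of `Ad` at `1`. -/
noncomputable def PadicLieGroup.adRep (h : PadicLieGroup p G) :
    (Fin h.dim → ℚ_[p]) →L[ℚ_[p]] ((Fin h.dim → ℚ_[p]) →L[ℚ_[p]] (Fin h.dim → ℚ_[p])) :=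
  letI := h.charted
  mfderiv (𝓘(ℚ_[p], Fin h.dim → ℚ_[p]))
    (𝓘(ℚ_[p], (Fin h.dim → ℚ_[p]) →L[ℚ_[p]] (Fin h.dim → ℚ_[p]))) h.Ad (1 : G)

/-- The Lie bracket on the Lie algebra of `G`: `⁅x, y⁆ = ad(x)(y)`. -/
noncomputable def PadicLieGroup.bracket (h : PadicLieGroup p G) :
    (Fin h.dim → ℚ_[p]) → (Fin h.dim → ℚ_[p]) → (Fin h.dim → ℚ_[p]) :=
  fun x y => h.adRep x y

/-- The Lie algebra `L(H)` of a subgroup `H ⊆ G`: the tangent cone to `H` at the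
identity, read in the chart at the identity. -/
noncomputable def PadicLieGroup.Lsub (h : PadicLieGroup p G) (H : Subgroup G) :
    Set (Fin h.dim → ℚ_[p]) :=
  letI := h.charted
  tangentConeAt ℚ_[p]
    ((chartAt (Fin h.dim → ℚ_[p]) (1 : G)) ''
      ((H : Set G) ∩ (chartAt (Fin h.dim → ℚ_[p]) (1 : G)).source))
    ((chartAt (Fin h.dim → ℚ_[p]) (1 : G)) 1)

/-- A `p`-adic Lie group is extraordinary if it is nearly simple, `G = ker Ad_G`, and the
commutator subgroup of every open subnormal subgroup is non-discrete. -/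
def PadicLieGroup.Extraordinary (h : PadicLieGroup p G) : Prop :=
  NearlySimple G ∧
    (∀ g : G, h.Ad g = ContinuousLinearMap.id ℚ_[p] (Fin h.dim → ℚ_[p])) ∧
    ∀ S : Subgroup G, IsSubnormal S → IsOpen (S : Set G) → ¬ DiscreteTopology (commutator S)

/-- Linearity of a `p`-adic Lie group. -/
def PadicLinear (p : ℕ) [Fact p.Prime] (G : Type*) [Group G] [TopologicalSpace G] : Prop :=
  ∃ (n : ℕ) (f : G →* GL (Fin n) ℚ_[p]), Continuous f ∧ Function.Injective f

/-! ### Bracket algebras (Lie-algebra notions for a not-yet-verified bracket) -/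

section Bracket

variable (K : Type*) [Field K] {V : Type*} [AddCommGroup V] [Module K V]

/-- A submodule is an ideal for a bracket if it absorbs brackets on both sides. -/
def IsBracketIdeal (b : V → V → V) (N : Submodule K V) : Prop :=
  ∀ x : V, ∀ y ∈ N, b x y ∈ N ∧ b y x ∈ N

/-- Derived series of a submodule with respect to a bracket. -/
def bracketDerivedSeries (b : V → V → V) (N : Submodule K V) : ℕ → Submodule K V
  | 0 => N
  | (k + 1) => Submodule.span K
      {z | ∃ x ∈ bracketDerivedSeries b N k, ∃ y ∈ bracketDerivedSeries b N k, z = b x y}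

/-- Solubility of a submodule with respect to a bracket. -/
def IsBracketSoluble (b : V → V → V) (N : Submodule K V) : Prop :=
  ∃ n, bracketDerivedSeries K b N n = ⊥

/-- The radical of a bracket algebra: the supremum of all soluble ideals. -/
def bracketRadical (b : V → V → V) : Submodule K V :=
  sSup {N | IsBracketIdeal K b N ∧ IsBracketSoluble K b N}

/-- Simplicity of a bracket algebra: non-abelian, and no ideals besides `⊥` and `⊤`. -/
def IsBracketSimple (b : V → V → V) : Prop :=
  (∃ x y, b x y ≠ 0) ∧ ∀ N : Submodule K V, IsBracketIdeal K b N → N = ⊥ ∨ N = ⊤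

end Bracket

/-! ### Automorphism groups of Lie algebras -/

/-- The automorphism group of a bracket on `Fin d → ℚ_[p]`, as a subgroup of
`GL (Fin d) ℚ_[p]`. -/
def autGroupOfBracket {p : ℕ} [Fact p.Prime] {d : ℕ}
    (b : (Fin d → ℚ_[p]) → (Fin d → ℚ_[p]) → (Fin d → ℚ_[p])) :
    Subgroup (GL (Fin d) ℚ_[p]) where
  carrier := {g | ∀ x y, (g : Matrix (Fin d) (Fin d) ℚ_[p]).mulVec (b x y)
      = b ((g : Matrix (Fin d) (Fin d) ℚ_[p]).mulVec x)
          ((g : Matrix (Fin d) (Fin d) ℚ_[p]).mulVec y)}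
  one_mem' := by
    intro x y
    simp [Matrix.one_mulVec]
  mul_mem' := by
    intro a c ha hc x y
    simp only [Units.val_mul, ← Matrix.mulVec_mulVec]
    rw [hc x y, ha]
  inv_mem' := by
    intro a ha x y
    have inva : ∀ v, (a : Matrix (Fin d) (Fin d) ℚ_[p]).mulVec
        (((a⁻¹ : GL (Fin d) ℚ_[p]) : Matrix (Fin d) (Fin d) ℚ_[p]).mulVec v) = v := by
      intro v
      rw [Matrix.mulVec_mulVec]
      have h1 : (a : Matrix (Fin d) (Fin d) ℚ_[p]) *
          ((a⁻¹ : GL (Fin d) ℚ_[p]) : Matrix (Fin d) (Fin d) ℚ_[p]) = 1 := by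
        rw [← Units.val_mul, mul_inv_cancel, Units.val_one]
      rw [h1, Matrix.one_mulVec]
    have ainv : ∀ v, ((a⁻¹ : GL (Fin d) ℚ_[p]) : Matrix (Fin d) (Fin d) ℚ_[p]).mulVec
        ((a : Matrix (Fin d) (Fin d) ℚ_[p]).mulVec v) = v := by
      intro v
      rw [Matrix.mulVec_mulVec]
      have h1 : ((a⁻¹ : GL (Fin d) ℚ_[p]) : Matrix (Fin d) (Fin d) ℚ_[p]) *
          (a : Matrix (Fin d) (Fin d) ℚ_[p]) = 1 := by
        rw [← Units.val_mul, inv_mul_cancel, Units.val_one]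
      rw [h1, Matrix.one_mulVec]
    conv_lhs => rw [show b x y = (a : Matrix (Fin d) (Fin d) ℚ_[p]).mulVec
      (b (((a⁻¹ : GL (Fin d) ℚ_[p]) : Matrix (Fin d) (Fin d) ℚ_[p]).mulVec x)
         (((a⁻¹ : GL (Fin d) ℚ_[p]) : Matrix (Fin d) (Fin d) ℚ_[p]).mulVec y)) from by
        rw [ha]; rw [inva, inva]]
    rw [ainv]

/-- `Q` is isomorphic (as a topological group) to a compact open subgroup of `Aut(𝔰)`
for some simple `p`-adic Lie algebra `𝔰`. -/
def IsoToCompactOpenLieAut (p : ℕ) [Fact p.Prime] (Q : Type*) [Group Q]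
    [TopologicalSpace Q] : Prop :=
  ∃ (m : ℕ) (_ : LieRing (Fin m → ℚ_[p])) (_ : LieAlgebra ℚ_[p] (Fin m → ℚ_[p])),
    LieAlgebra.IsSimple ℚ_[p] (Fin m → ℚ_[p]) ∧
    ∃ H : Subgroup (autGroupOfBracket (fun x y : Fin m → ℚ_[p] => ⁅x, y⁆)),
      IsOpen (H : Set (autGroupOfBracket (fun x y : Fin m → ℚ_[p] => ⁅x, y⁆))) ∧
      CompactSpace H ∧ TopGrpIso Q H

/-- `Q` is isomorphic (as a topological group) to an open subgroup of `Aut(𝔰)`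
for some simple `p`-adic Lie algebra `𝔰`. -/
def IsoToOpenLieAut (p : ℕ) [Fact p.Prime] (Q : Type*) [Group Q]
    [TopologicalSpace Q] : Prop :=
  ∃ (m : ℕ) (_ : LieRing (Fin m → ℚ_[p])) (_ : LieAlgebra ℚ_[p] (Fin m → ℚ_[p])),
    LieAlgebra.IsSimple ℚ_[p] (Fin m → ℚ_[p]) ∧
    ∃ H : Subgroup (autGroupOfBracket (fun x y : Fin m → ℚ_[p] => ⁅x, y⁆)),
      IsOpen (H : Set (autGroupOfBracket (fun x y : Fin m → ℚ_[p] => ⁅x, y⁆))) ∧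
      TopGrpIso Q H

/-! ### Elementary groups and the construction rank -/

/-- Totally disconnected, locally compact, second countable topological group. -/
def TDLCSC (G : Type u) [Group G] [TopologicalSpace G] : Prop :=
  IsTopologicalGroup G ∧ LocallyCompactSpace G ∧ T2Space G ∧ TotallyDisconnectedSpace G ∧
    SecondCountableTopology G

/-- The class `Σ₀`: countable discrete groups and metrizable profinite groups. -/
def SigmaZero (G : Type u) [Group G] [TopologicalSpace G] : Prop :=
  TDLCSC G ∧ ((Countable G ∧ DiscreteTopology G) ∨
    (CompactSpace G ∧ T2Space G ∧ TotallyDisconnectedSpace G ∧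
      TopologicalSpace.MetrizableSpace G))

/-- The classes `Σ_λ` of Wesolek's construction rank: `Σ₀` consists of countable discrete
and metrizable profinite groups, `Σ_{μ+1}` is obtained from `Σ_μ` by extensions with
quotient in `Σ₀` and by countable ascending unions of open subgroups, and limit stages
are unions of the previous stages. -/
inductive SigmaClass : Ordinal.{u} → ∀ (G : Type u) [Group G] [TopologicalSpace G], Prop
  | base (o : Ordinal.{u}) (G : Type u) [Group G] [TopologicalSpace G] :
      SigmaZero G → SigmaClass o G
  | ext (o : Ordinal.{u}) (G : Type u) [Group G] [TopologicalSpace G]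
      (N : Subgroup G) (hN : N.Normal) : TDLCSC G → IsClosed (N : Set G) →
      SigmaClass o N → SigmaZero (G ⧸ N) → SigmaClass (o + 1) G
  | union (o : Ordinal.{u}) (G : Type u) [Group G] [TopologicalSpace G] (V : ℕ → Subgroup G) :
      TDLCSC G → Monotone V → (∀ n, IsOpen ((V n : Set G))) → (∀ x : G, ∃ n, x ∈ V n) →
      (∀ n, SigmaClass o (V n)) → SigmaClass (o + 1) G
  | mono (o o' : Ordinal.{u}) (G : Type u) [Group G] [TopologicalSpace G] :
      o ≤ o' → SigmaClass o G → SigmaClass o' G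

/-- A topological group is elementary if it lies in some class `Σ_λ`. -/
def IsElementary (G : Type u) [Group G] [TopologicalSpace G] : Prop :=
  ∃ o : Ordinal.{u}, SigmaClass o G

/-- The construction rank: the least `λ` with `G ∈ Σ_λ`. -/
noncomputable def erk (G : Type u) [Group G] [TopologicalSpace G] : Ordinal.{u} :=
  sInf {o : Ordinal.{u} | SigmaClass o G}

/-- The "exactly one" alternative for the subfactors in Theorem B. -/
def TheoremBAlternative (p : ℕ) [Fact p.Prime] (Q : Type*) [Group Q] [TopologicalSpace Q] :
    Prop :=
  ExactlyOne4
    (Countable Q ∧ DiscreteTopology Q)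
    (TopGrpIso Q (Multiplicative ℤ_[p]))
    ((∃ hQ : PadicLieGroup p Q, hQ.Extraordinary) ∧ SigmaCompactSpace Q)
    (IsoToCompactOpenLieAut p Q)

/-! The preimage `P` of a closed subnormal subgroup `S ≤ G ⧸ D` is a closed subnormal subgroup
of `G`, hence open or discrete. The quotient map is open and surjective, so `S`, its image,
is open in the first case; in the second, an open set isolating `x` in `P` maps to one
isolating `x D` in `S`. -/

open Filter Topology

theorem IsSubnormal.comap {G H : Type*} [Group G] [Group H] (f : G →* H) {S : Subgroup H}
    (hS : IsSubnormal S) : IsSubnormal (S.comap f) := by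
  obtain ⟨k, c, hc₀, hck, hle, hconj⟩ := hS
  refine ⟨k, fun i => (c i).comap f, by simp [hc₀], by simp [hck],
    fun i => Subgroup.comap_mono (hle i), fun i x hx y hy => ?_⟩
  simpa only [Subgroup.mem_comap, map_mul, map_inv] using hconj i (f x) hx (f y) hy

theorem IsOpenMap.discreteTopology_of_discreteTopology_preimage {X Y : Type*}
    [TopologicalSpace X] [TopologicalSpace Y] {f : X → Y} (hf : IsOpenMap f)
    (hsurj : Function.Surjective f) {T : Set Y} (hT : DiscreteTopology (f ⁻¹' T)) :
    DiscreteTopology T := by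
  rw [discreteTopology_subtype_iff] at hT ⊢
  intro y hy
  obtain ⟨x, rfl⟩ := hsurj y
  refine le_bot_iff.1 ?_
  calc 𝓝[≠] f x ⊓ 𝓟 T = 𝓝 (f x) ⊓ 𝓟 ({f x}ᶜ ∩ T) := by
        rw [nhdsWithin, inf_assoc, inf_principal]
    _ ≤ map f (𝓝 x ⊓ 𝓟 (f ⁻¹' ({f x}ᶜ ∩ T))) := by
        rw [map_inf_principal_preimage]
        exact inf_le_inf_right _ (hf.nhds_le x)
    _ ≤ map f (𝓝[≠] x ⊓ 𝓟 (f ⁻¹' T)) := by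
        refine map_mono ?_
        rw [nhdsWithin, inf_assoc, inf_principal]
        refine inf_le_inf_left _ (principal_mono.2 fun z hz => ⟨?_, hz.2⟩)
        rintro rfl
        exact hz.1 rfl
    _ = ⊥ := by rw [hT x hy, map_bot]

theorem stmt13_general {G : Type*} [Group G] [TopologicalSpace G] [IsTopologicalGroup G]
    (D : Subgroup G) [D.Normal] (hns : NearlySimple G) :
    NearlySimple (G ⧸ D) := by
  intro S hS hS_closed
  have hπ_open : IsOpenMap ((↑) : G → G ⧸ D) := QuotientGroup.isOpenMap_coe
  have hπ_surj : Function.Surjective ((↑) : G → G ⧸ D) := QuotientGroup.mk_surjective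
  rcases hns (S.comap (QuotientGroup.mk' D)) (hS.comap _)
      (hS_closed.preimage continuous_quot_mk) with hP_open | hP_discrete
  · left
    simpa [Set.image_preimage_eq _ hπ_surj] using hπ_open _ hP_open
  · exact Or.inr (hπ_open.discreteTopology_of_discreteTopology_preimage hπ_surj hP_discrete)

/-- Lemma 2.8: quotients of nearly simple groups by discrete normal
subgroups are nearly simple. -/
theorem stmt13 {G : Type*} [Group G] [TopologicalSpace G] [IsTopologicalGroup G]
    (D : Subgroup G) [D.Normal] (hD : DiscreteTopology D) (hns : NearlySimple G) :
    NearlySimple (G ⧸ D) :=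
  stmt13_general D hns
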